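/- arXiv:1305.6883 — 4 statements merged into one kernel-verified Lean document; each statement's English description precedes it below -/
import Mathlib

section
/- Both second-order diagonal combination I₁ and antisymmetric combination I₂ of iterated integrals are invariant under rotation: for any C¹ curve X : [0,T] → ℝ² and any θ ∈ ℝ, letting X̄ = R(θ)X where R(θ) is the rotation matrix by angle θ, the quantities ∫₀ᵀ∫₀ʳ X̄¹'(u)X̄¹'(r)dudr + ∫₀ᵀ∫₀ʳ X̄²'(u)X̄²'(r)dudr and ∫₀ᵀ∫₀ʳ X̄¹'(u)X̄²'(r)dudr − ∫₀ᵀ∫₀ʳ X̄²'(u)X̄¹'(r)dudr coincide with the corresponding quantities for X. -/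
/-- The curve rotated by angle θ (rotation matrix with rows (cos θ, sin θ), (−sin θ, cos θ)). -/
noncomputable def rot (θ : ℝ) (X : Fin 2 → ℝ → ℝ) : Fin 2 → ℝ → ℝ :=
  ![fun t => Real.cos θ * X 0 t + Real.sin θ * X 1 t,
    fun t => -Real.sin θ * X 0 t + Real.cos θ * X 1 t]

/-- both I₁ (diagonal) and I₂ (antisymmetric) second-order combinations
are invariant under rotation. -/
theorem stmt2 (T θ : ℝ) (hT : 0 ≤ T) (X : Fin 2 → ℝ → ℝ)
    (hX : ∀ i, ContDiff ℝ 1 (X i)) :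
    ((∫ r in (0:ℝ)..T, (∫ u in (0:ℝ)..r, deriv (rot θ X 0) u) * deriv (rot θ X 0) r) +
      (∫ r in (0:ℝ)..T, (∫ u in (0:ℝ)..r, deriv (rot θ X 1) u) * deriv (rot θ X 1) r) =
     (∫ r in (0:ℝ)..T, (∫ u in (0:ℝ)..r, deriv (X 0) u) * deriv (X 0) r) +
      (∫ r in (0:ℝ)..T, (∫ u in (0:ℝ)..r, deriv (X 1) u) * deriv (X 1) r)) ∧
    ((∫ r in (0:ℝ)..T, (∫ u in (0:ℝ)..r, deriv (rot θ X 0) u) * deriv (rot θ X 1) r) -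
      (∫ r in (0:ℝ)..T, (∫ u in (0:ℝ)..r, deriv (rot θ X 1) u) * deriv (rot θ X 0) r) =
     (∫ r in (0:ℝ)..T, (∫ u in (0:ℝ)..r, deriv (X 0) u) * deriv (X 1) r) -
      (∫ r in (0:ℝ)..T, (∫ u in (0:ℝ)..r, deriv (X 1) u) * deriv (X 0) r)) := by
  have h0 := hX 0
  have h1 := hX 1
  have hd0 : Differentiable ℝ (X 0) := h0.differentiable one_ne_zero
  have hd1 : Differentiable ℝ (X 1) := h1.differentiable one_ne_zero
  set c := Real.cos θ with hc
  set s := Real.sin θ with hs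
  set f := deriv (X 0) with hfdef
  set g := deriv (X 1) with hgdef
  have hf : Continuous f := h0.continuous_deriv le_rfl
  have hg : Continuous g := h1.continuous_deriv le_rfl
  have hr0 : deriv (rot θ X 0) = fun t => c * f t + s * g t := by
    funext t
    have he : rot θ X 0 = fun t => c * X 0 t + s * X 1 t := rfl
    rw [he, deriv_fun_add ((hd0 t).const_mul c) ((hd1 t).const_mul s),
        deriv_const_mul c (hd0 t), deriv_const_mul s (hd1 t)]
  have hr1 : deriv (rot θ X 1) = fun t => (-s) * f t + c * g t := by
    funext t
    have he : rot θ X 1 = fun t => (-s) * X 0 t + c * X 1 t := rfl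
    rw [he, deriv_fun_add ((hd0 t).const_mul (-s)) ((hd1 t).const_mul c),
        deriv_const_mul (-s) (hd0 t), deriv_const_mul c (hd1 t)]
  -- primitives
  set A : ℝ → ℝ := fun r => ∫ u in (0:ℝ)..r, f u with hA
  set B : ℝ → ℝ := fun r => ∫ u in (0:ℝ)..r, g u with hB
  have hAc : Continuous A :=
    intervalIntegral.continuous_primitive (fun a b => hf.intervalIntegrable a b) 0
  have hBc : Continuous B :=
    intervalIntegral.continuous_primitive (fun a b => hg.intervalIntegrable a b) 0
  have hinner : ∀ (p q r : ℝ),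
      (∫ u in (0:ℝ)..r, p * f u + q * g u) = p * A r + q * B r := by
    intro p q r
    rw [intervalIntegral.integral_add ((continuous_const.fun_mul hf).intervalIntegrable 0 r)
        ((continuous_const.fun_mul hg).intervalIntegrable 0 r),
      intervalIntegral.integral_const_mul, intervalIntegral.integral_const_mul]
  have hexp : ∀ (p q p' q' : ℝ),
      (∫ r in (0:ℝ)..T, (p * A r + q * B r) * (p' * f r + q' * g r)) =
        p * p' * (∫ r in (0:ℝ)..T, A r * f r) + p * q' * (∫ r in (0:ℝ)..T, A r * g r) +
        q * p' * (∫ r in (0:ℝ)..T, B r * f r) + q * q' * (∫ r in (0:ℝ)..T, B r * g r) := by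
    intro p q p' q'
    have h1 : ∀ r : ℝ, (p * A r + q * B r) * (p' * f r + q' * g r) =
        p * p' * (A r * f r) + p * q' * (A r * g r) + q * p' * (B r * f r) +
          q * q' * (B r * g r) := by intro r; ring
    have iAf : IntervalIntegrable (fun r => p * p' * (A r * f r)) MeasureTheory.volume 0 T :=
      (continuous_const.mul (hAc.mul hf)).intervalIntegrable 0 T
    have iAg : IntervalIntegrable (fun r => p * q' * (A r * g r)) MeasureTheory.volume 0 T :=
      (continuous_const.mul (hAc.mul hg)).intervalIntegrable 0 T
    have iBf : IntervalIntegrable (fun r => q * p' * (B r * f r)) MeasureTheory.volume 0 T :=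
      (continuous_const.mul (hBc.mul hf)).intervalIntegrable 0 T
    have iBg : IntervalIntegrable (fun r => q * q' * (B r * g r)) MeasureTheory.volume 0 T :=
      (continuous_const.mul (hBc.mul hg)).intervalIntegrable 0 T
    simp only [h1]
    rw [intervalIntegral.integral_add ((iAf.add iAg).add iBf) iBg,
        intervalIntegral.integral_add (iAf.add iAg) iBf,
        intervalIntegral.integral_add iAf iAg,
        intervalIntegral.integral_const_mul, intervalIntegral.integral_const_mul,
        intervalIntegral.integral_const_mul, intervalIntegral.integral_const_mul]
  have hcs : c ^ 2 + s ^ 2 = 1 := by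
    rw [hc, hs]; exact Real.cos_sq_add_sin_sq θ
  simp only [hr0, hr1, hinner, hexp]
  constructor
  · simp only [hA, hB]
    linear_combination ((∫ r in (0:ℝ)..T, (∫ u in (0:ℝ)..r, f u) * f r) +
      (∫ r in (0:ℝ)..T, (∫ u in (0:ℝ)..r, g u) * g r)) * hcs
  · simp only [hA, hB]
    linear_combination ((∫ r in (0:ℝ)..T, (∫ u in (0:ℝ)..r, f u) * g r) -
      (∫ r in (0:ℝ)..T, (∫ u in (0:ℝ)..r, g u) * f r)) * hcs
end

section
/- For a word (i₁,…,iₙ) ∈ {1,2}ⁿ with #{k : i_k = 1} = #{k : i_k = 2}, the complex iterated integral ∫_{0≤r₁≤⋯≤rₙ≤T} (Z^{i₁})'(r₁)⋯(Z^{iₙ})'(rₙ) dr₁⋯drₙ, where Z¹ = X¹ + iX² and Z² = X¹ − iX², is invariant under rotation of the curve X: it takes the same value for X and for R(θ)X, for every θ ∈ ℝ. -/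
/-- Iterated integral over the simplex a ≤ r₁ ≤ ⋯ ≤ rₙ ≤ b of the product
g₁(r₁)⋯gₙ(rₙ); the head of the list is the innermost (first) variable. -/
noncomputable def itIntC : List (ℝ → ℂ) → ℝ → ℝ → ℂ
  | [], _, _ => 1
  | g :: gs, a, b => ∫ r in a..b, g r * itIntC gs r b

/-- Complexified coordinate curves Z¹ = X¹ + iX², Z² = X¹ − iX²
(letter 0 stands for "1", letter 1 stands for "2"). -/
noncomputable def Zc (X : Fin 2 → ℝ → ℝ) : Fin 2 → ℝ → ℂ :=
  ![fun t => (X 0 t : ℂ) + Complex.I * (X 1 t : ℂ),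
    fun t => (X 0 t : ℂ) - Complex.I * (X 1 t : ℂ)]

/-- Scaling each factor by a constant pulls out the product of the constants. -/
lemma itIntC_scale (c : Fin 2 → ℂ) (g : Fin 2 → ℝ → ℂ) :
    ∀ (w : List (Fin 2)) (a b : ℝ),
      itIntC (w.map fun i => fun r => c i * g i r) a b =
        (w.map c).prod * itIntC (w.map g) a b := by
  intro w
  induction w with
  | nil => intro a b; simp [itIntC]
  | cons i w ih =>
      intro a b
      simp only [List.map_cons, itIntC, List.prod_cons, ih]
      rw [← intervalIntegral.integral_const_mul]
      congr 1; ext r; ring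

lemma prod_c (θ : ℝ) :
    ∀ w : List (Fin 2),
      (w.map (![Complex.exp (-(θ:ℂ) * Complex.I),
                Complex.exp ((θ:ℂ) * Complex.I)] : Fin 2 → ℂ)).prod =
        Complex.exp (-(θ:ℂ) * Complex.I) ^ w.count 0 *
          Complex.exp ((θ:ℂ) * Complex.I) ^ w.count 1 := by
  intro w
  induction w with
  | nil => simp
  | cons i w ih =>
      fin_cases i <;>
        simp only [List.map_cons, List.prod_cons, List.count_cons, Matrix.cons_val_zero,
          Matrix.cons_val_one, Matrix.head_cons, ih] <;>
        simp <;> ring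

/-- for a word with equally many letters 1 and 2, the complex iterated
integral over Z¹ = X¹+iX², Z² = X¹−iX² is invariant under rotation of X. -/
theorem stmt5 (T θ : ℝ) (hT : 0 ≤ T) (X : Fin 2 → ℝ → ℝ)
    (hX : ∀ i, ContDiff ℝ 1 (X i)) (w : List (Fin 2))
    (hw : w.count 0 = w.count 1) :
    itIntC (w.map fun i => deriv (Zc (rot θ X) i)) 0 T =
      itIntC (w.map fun i => deriv (Zc X i)) 0 T := by
  set c : Fin 2 → ℂ := ![Complex.exp (-(θ:ℂ) * Complex.I),
    Complex.exp ((θ:ℂ) * Complex.I)] with hc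
  have hc0 : c 0 = ((Real.cos θ : ℂ) - (Real.sin θ : ℂ) * Complex.I) := by
    show Complex.exp (-(θ:ℂ) * Complex.I) = _
    rw [show -(θ:ℂ) * Complex.I = ((-θ:ℝ):ℂ) * Complex.I by push_cast; ring,
      Complex.exp_mul_I, ← Complex.ofReal_cos, ← Complex.ofReal_sin]
    push_cast
    simp [Real.cos_neg, Real.sin_neg]
    ring
  have hc1 : c 1 = ((Real.cos θ : ℂ) + (Real.sin θ : ℂ) * Complex.I) := by
    show Complex.exp ((θ:ℂ) * Complex.I) = _
    rw [Complex.exp_mul_I, ← Complex.ofReal_cos, ← Complex.ofReal_sin]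
  have hZ : ∀ i, Zc (rot θ X) i = fun t => c i * Zc X i t := by
    intro i
    fin_cases i <;> ext t
    · simp only [Zc, rot, Matrix.cons_val_zero, Matrix.cons_val_one, Matrix.head_cons,
        Fin.zero_eta, hc0]
      push_cast
      have := Complex.I_sq
      ring_nf
      rw [Complex.I_sq]
      ring
    · simp only [Zc, rot, Matrix.cons_val_zero, Matrix.cons_val_one, Matrix.head_cons,
        Fin.mk_one, hc1]
      push_cast
      ring_nf
      rw [Complex.I_sq]
      ring
  have hderiv : ∀ i, deriv (Zc (rot θ X) i) = fun t => c i * deriv (Zc X i) t := by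
    intro i
    ext t
    rw [hZ i]
    exact deriv_const_mul_field (c i)
  have key : (w.map fun i => deriv (Zc (rot θ X) i)) =
      (w.map fun i => fun r => c i * deriv (Zc X i) r) := by
    apply List.map_congr_left
    intro i _
    exact hderiv i
  rw [key, itIntC_scale c (fun i => deriv (Zc X i)) w 0 T]
  rw [prod_c θ w, hw, ← mul_pow, ← Complex.exp_add]
  ring_nf
  simp
end

section
/- Shuffle identity for iterated integrals: let X : [0,T] → ℝ² be a C¹ curve and define, for each word w = (i₁,…,iₙ) in the alphabet {1,2}, S(X)(w) = ∫_{0≤r₁≤⋯≤rₙ≤T} (X^{i₁})'(r₁)⋯(X^{iₙ})'(rₙ) dr. Then for all words u, v it holds that S(X)(u)·S(X)(v) = Σ_{w ∈ u ⧢ v} S(X)(w), where u ⧢ v denotes the multiset of shuffles of u and v. -/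
/-- Iterated integral over the simplex a ≤ r₁ ≤ ⋯ ≤ rₙ ≤ b of the product
g₁(r₁)⋯gₙ(rₙ); the head of the list is the innermost (first) variable. -/
noncomputable def itInt : List (ℝ → ℝ) → ℝ → ℝ → ℝ
  | [], _, _ => 1
  | g :: gs, a, b => ∫ r in a..b, g r * itInt gs r b

/-- The iterated-integral (signature) coefficient of the curve X over the word w. -/
noncomputable def sig (X : Fin 2 → ℝ → ℝ) (T : ℝ) (w : List (Fin 2)) : ℝ :=
  itInt (w.map fun i => deriv (X i)) 0 T

/-- The shuffle of two words, as the multiset of all interleavings preserving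
the relative order of the letters of each word. -/
def shuffle : List (Fin 2) → List (Fin 2) → Multiset (List (Fin 2))
  | [], v => {v}
  | u, [] => {u}
  | a :: u, b :: v =>
      ((shuffle u (b :: v)).map (a :: ·)) + ((shuffle (a :: u) v).map (b :: ·))
  termination_by u v => u.length + v.length

lemma hasDerivAt_int_left {f : ℝ → ℝ} (hf : Continuous f) (a b : ℝ) :
    HasDerivAt (fun u => ∫ x in u..b, f x) (-f a) a :=
  intervalIntegral.integral_hasDerivAt_left (hf.intervalIntegrable a b)
    (hf.stronglyMeasurableAtFilter _ _) hf.continuousAt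

lemma itInt_cont : ∀ (gs : List (ℝ → ℝ)), (∀ g ∈ gs, Continuous g) → ∀ b : ℝ,
    Continuous (fun a => itInt gs a b) := by
  intro gs
  induction gs with
  | nil => intro _ b; simpa [itInt] using continuous_const
  | cons g gs ih =>
    intro h b
    have hg : Continuous g := h g (by simp)
    have ih' := ih (fun g' hg' => h g' (by simp [hg'])) b
    have hint : Continuous (fun r => g r * itInt gs r b) := hg.mul ih'
    have : ∀ a, HasDerivAt (fun a => itInt (g :: gs) a b)
        (-(g a * itInt gs a b)) a := by
      intro a
      simpa [itInt] using hasDerivAt_int_left hint a b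
    exact continuous_iff_continuousAt.2 fun a => (this a).continuousAt

lemma itInt_hasDerivAt {g : ℝ → ℝ} {gs : List (ℝ → ℝ)} (hg : Continuous g)
    (h : ∀ g' ∈ gs, Continuous g') (b a : ℝ) :
    HasDerivAt (fun a => itInt (g :: gs) a b) (-(g a * itInt gs a b)) a := by
  simpa [itInt] using hasDerivAt_int_left (hg.mul (itInt_cont gs h b)) a b

lemma hasDerivAt_msum {α : Type*} (s : Multiset α) (f : α → ℝ → ℝ) (f' : α → ℝ)
    (a : ℝ) (h : ∀ w ∈ s, HasDerivAt (f w) (f' w) a) :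
    HasDerivAt (fun x => (s.map (fun w => f w x)).sum) ((s.map f').sum) a := by
  induction s using Multiset.induction with
  | empty => simpa using hasDerivAt_const a (0 : ℝ)
  | cons c s ih =>
    simp only [Multiset.map_cons, Multiset.sum_cons]
    exact (h c (by simp)).add (ih fun w hw => h w (Multiset.mem_cons_of_mem hw))

lemma itInt_map_cont (D : Fin 2 → ℝ → ℝ) (hD : ∀ i, Continuous (D i))
    (w : List (Fin 2)) : ∀ g ∈ w.map D, Continuous g := by
  intro g hg
  obtain ⟨i, _, rfl⟩ := List.mem_map.1 hg
  exact hD i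

lemma key (D : Fin 2 → ℝ → ℝ) (hD : ∀ i, Continuous (D i)) (T : ℝ) :
    ∀ n : ℕ, ∀ u v : List (Fin 2), u.length + v.length = n → ∀ a : ℝ,
      itInt (u.map D) a T * itInt (v.map D) a T
        = ((shuffle u v).map (fun w => itInt (w.map D) a T)).sum := by
  intro n
  induction n using Nat.strong_induction_on with
  | _ n IH =>
    intro u v hn a
    match u, v with
    | [], v => simp [shuffle, itInt]
    | (i :: u'), [] => simp [shuffle, itInt]
    | (i :: u'), (j :: v') =>
      -- set up the two sides as functions of a
      set L : ℝ → ℝ := fun a => itInt ((i :: u').map D) a T * itInt ((j :: v').map D) a T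
        with hLdef
      set R : ℝ → ℝ := fun a =>
        ((shuffle (i :: u') (j :: v')).map (fun w => itInt (w.map D) a T)).sum with hRdef
      have hcontu' := itInt_map_cont D hD u'
      have hcontv' := itInt_map_cont D hD v'
      have hcontu := itInt_map_cont D hD (i :: u')
      have hcontv := itInt_map_cont D hD (j :: v')
      -- derivative of L
      have hL : ∀ a, HasDerivAt L
          (-(D i a * itInt (u'.map D) a T) * itInt ((j :: v').map D) a T
            + itInt ((i :: u').map D) a T * -(D j a * itInt (v'.map D) a T)) a := by
        intro a
        exact (itInt_hasDerivAt (hD i) hcontu' T a).mul (itInt_hasDerivAt (hD j) hcontv' T a)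
      -- derivative of R
      have hshuf : shuffle (i :: u') (j :: v')
          = ((shuffle u' (j :: v')).map (i :: ·)) + (Multiset.map (j :: ·) (shuffle (i :: u') v')) := by
        rw [shuffle]
      have hR : ∀ a, HasDerivAt R
          (-(D i a * ((shuffle u' (j :: v')).map (fun w => itInt (w.map D) a T)).sum)
            + -(D j a * ((shuffle (i :: u') v').map (fun w => itInt (w.map D) a T)).sum)) a := by
        intro a
        have h1 : HasDerivAt (fun x =>
            ((shuffle u' (j :: v')).map (fun w => itInt ((i :: w).map D) x T)).sum)
            (((shuffle u' (j :: v')).map (fun w => -(D i a * itInt (w.map D) a T))).sum) a := by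
          apply hasDerivAt_msum
          intro w _
          exact itInt_hasDerivAt (hD i) (itInt_map_cont D hD w) T a
        have h2 : HasDerivAt (fun x =>
            ((shuffle (i :: u') v').map (fun w => itInt ((j :: w).map D) x T)).sum)
            (((shuffle (i :: u') v').map (fun w => -(D j a * itInt (w.map D) a T))).sum) a := by
          apply hasDerivAt_msum
          intro w _
          exact itInt_hasDerivAt (hD j) (itInt_map_cont D hD w) T a
        have hre : R = fun x =>
            ((shuffle u' (j :: v')).map (fun w => itInt ((i :: w).map D) x T)).sum
            + ((shuffle (i :: u') v').map (fun w => itInt ((j :: w).map D) x T)).sum := by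
          funext x
          simp [hRdef, hshuf, Multiset.map_map, Function.comp]
        rw [hre]
        have := h1.add h2
        refine this.congr_deriv ?_
        simp only [← neg_mul, Multiset.sum_map_mul_left]
      -- derivatives agree, using the induction hypothesis
      have hderiv_eq : ∀ a, HasDerivAt (fun x => L x - R x) 0 a := by
        intro a
        have e1 : itInt (u'.map D) a T * itInt ((j :: v').map D) a T
            = ((shuffle u' (j :: v')).map (fun w => itInt (w.map D) a T)).sum := by
          apply IH (u'.length + (j :: v').length) _ u' (j :: v') rfl a
          simp only [List.length_cons] at hn ⊢
          omega
        have e2 : itInt ((i :: u').map D) a T * itInt (v'.map D) a T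
            = ((shuffle (i :: u') v').map (fun w => itInt (w.map D) a T)).sum := by
          apply IH ((i :: u').length + v'.length) _ (i :: u') v' rfl a
          simp only [List.length_cons] at hn ⊢
          omega
        have := (hL a).sub (hR a)
        refine this.congr_deriv ?_
        rw [← e1, ← e2]
        ring
      -- both sides vanish at a = T
      have hzero : ∀ (k : Fin 2) (w : List (Fin 2)), itInt ((k :: w).map D) T T = 0 := by
        intro k w
        simp [itInt]
      have hT0 : L T - R T = 0 := by
        have hRT : R T = 0 := by
          apply Multiset.sum_eq_zero
          intro x hx
          rw [Multiset.mem_map] at hx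
          obtain ⟨w, hw, rfl⟩ := hx
          rw [hshuf] at hw
          rcases Multiset.mem_add.1 hw with h | h <;>
          · obtain ⟨w', _, rfl⟩ := Multiset.mem_map.1 h
            exact hzero _ _
        have hLT : L T = 0 := by
          have h1 := hzero i u'
          simp only [hLdef]
          rw [h1, zero_mul]
        rw [hLT, hRT, sub_zero]
      have hconst : (fun x => L x - R x) a = (fun x => L x - R x) T :=
        is_const_of_deriv_eq_zero (fun x => (hderiv_eq x).differentiableAt)
          (fun x => (hderiv_eq x).deriv) a T
      have h0 : L a - R a = 0 := hconst.trans hT0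
      have : L a = R a := by linarith
      exact this

/-- the shuffle identity S(X)(u)·S(X)(v) = Σ_{w ∈ u ⧢ v} S(X)(w). -/
theorem stmt8 (T : ℝ) (hT : 0 ≤ T) (X : Fin 2 → ℝ → ℝ)
    (hX : ∀ i, ContDiff ℝ 1 (X i)) (u v : List (Fin 2)) :
    sig X T u * sig X T v = ((shuffle u v).map (sig X T)).sum := by
  have hD : ∀ i, Continuous (deriv (X i)) := fun i => (hX i).continuous_deriv le_rfl
  exact key (fun i => deriv (X i)) hD T (u.length + v.length) u v rfl 0
end

section
/- For every n ≥ 1, the ℂ-span of the degree-n components of signatures of continuous bounded-variation (equivalently, piecewise linear) paths X : [0,1] → ℝ² is the entire degree-n homogeneous component of the free algebra on two generators over ℂ: span_ℂ{ πₙ(S(X)₀,₁) : X piecewise linear } = πₙ T((ℂ²)). -/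
open Set

/-- X : [0,T] → ℝ² is continuous piecewise linear: there is a partition
0 = τ₀ ≤ ⋯ ≤ τₘ = T on each interval of which X is affine. -/
def IsPWLinear (X : Fin 2 → ℝ → ℝ) (T : ℝ) : Prop :=
  ∃ (m : ℕ) (τ : Fin (m + 1) → ℝ), Monotone τ ∧ τ 0 = 0 ∧ τ (Fin.last m) = T ∧
    ∀ j : Fin m, ∃ V : Fin 2 → ℝ,
      ∀ s ∈ Icc (τ j.castSucc) (τ j.succ), ∀ a : Fin 2,
        X a s = X a (τ j.castSucc) + (s - τ j.castSucc) * V a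

namespace Stmt13
open MeasureTheory intervalIntegral
open scoped NNReal

def Nice (g : ℝ → ℝ) : Prop := Measurable g ∧ ∃ C, ∀ x, |g x| ≤ C

lemma Nice.intervalIntegrable {g : ℝ → ℝ} (hg : Nice g) (a b : ℝ) :
    IntervalIntegrable g volume a b := by
  obtain ⟨hm, C, hC⟩ := hg
  constructor <;>
  · refine ⟨hm.aestronglyMeasurable.restrict, ?_⟩
    exact MeasureTheory.HasFiniteIntegral.of_bounded (C := C)
      (Filter.Eventually.of_forall fun x => by simpa using hC x)

lemma nice_mul_cont {g φ : ℝ → ℝ} (hg : Nice g) (hφ : Continuous φ) (a b : ℝ) :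
    IntervalIntegrable (fun r => g r * φ r) volume a b :=
  (hg.intervalIntegrable a b).mul_continuousOn hφ.continuousOn

lemma itInt_cont (l : List (ℝ → ℝ)) (hl : ∀ g ∈ l, Nice g) (B : ℝ) :
    Continuous fun r => itInt l r B := by
  induction l with
  | nil => simpa [itInt] using continuous_const
  | cons g gs ih =>
    have hgs : ∀ f ∈ gs, Nice f := fun f hf => hl f (List.mem_cons_of_mem _ hf)
    have hcont := ih hgs
    have h1 : Continuous fun r => ∫ s in B..r, g s * itInt gs s B :=
      intervalIntegral.continuous_primitive
        (fun a b => nice_mul_cont (hl g List.mem_cons_self) hcont a b) B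
    have h2 : (fun r => itInt (g :: gs) r B)
        = fun r => - ∫ s in B..r, g s * itInt gs s B := by
      funext r
      rw [show itInt (g :: gs) r B = ∫ s in r..B, g s * itInt gs s B from rfl,
        intervalIntegral.integral_symm]
    rw [h2]; exact h1.neg

lemma integral_pow_sub {a b : ℝ} (k : ℕ) :
    (∫ r in a..b, (b - r) ^ k) = (b - a) ^ (k + 1) / (k + 1) := by
  rw [intervalIntegral.integral_comp_sub_left (fun x => x ^ k) b]
  rw [integral_pow, sub_self, zero_pow (Nat.succ_ne_zero k), sub_zero]



lemma chenConst {ι : Type} (G : ι → ℝ → ℝ) (hG : ∀ i, Nice (G i)) (c : ι → ℝ)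
    (b B : ℝ) (hbB : b ≤ B) (l : List ι) :
    ∀ (a : ℝ), a ≤ b → (∀ i ∈ l, ∀ r ∈ Ioo a b, G i r = c i) →
    itInt (l.map G) a B =
      ∑ k ∈ Finset.range (l.length + 1),
        ((l.take k).map c).prod * (b - a) ^ k / (k.factorial : ℝ)
          * itInt ((l.drop k).map G) b B := by
  induction l with
  | nil => intro a hab hc; simp [itInt]
  | cons i l ih =>
    intro a hab hc
    have hNice : ∀ g ∈ l.map G, Nice g := by
      intro g hg; obtain ⟨j, _, rfl⟩ := List.mem_map.1 hg; exact hG j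
    have hcont : Continuous fun r => itInt (l.map G) r B := itInt_cont _ hNice B
    have hint : ∀ a' b' : ℝ, IntervalIntegrable (fun r => G i r * itInt (l.map G) r B)
        volume a' b' := fun a' b' => nice_mul_cont (hG i) hcont a' b'
    have hsplit : itInt ((i :: l).map G) a B
        = (∫ r in a..b, G i r * itInt (l.map G) r B)
          + ∫ r in b..B, G i r * itInt (l.map G) r B := by
      rw [show itInt ((i :: l).map G) a B
        = ∫ r in a..B, G i r * itInt (l.map G) r B from rfl,
        ← intervalIntegral.integral_add_adjacent_intervals (hint a b) (hint b B)]
    have htail : (∫ r in b..B, G i r * itInt (l.map G) r B) = itInt ((i :: l).map G) b B := rfl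
    -- compute the head integral
    have hae : (∫ r in a..b, G i r * itInt (l.map G) r B)
        = ∫ r in a..b, (∑ k ∈ Finset.range (l.length + 1),
            (c i * (((l.take k).map c).prod * itInt ((l.drop k).map G) b B / (k.factorial : ℝ)))
              * (b - r) ^ k) := by
      apply intervalIntegral.integral_congr_ae
      have hb : ∀ᵐ x : ℝ, x ≠ b := by
        have : ({b} : Set ℝ) =ᵐ[volume] (∅ : Set ℝ) :=
          MeasureTheory.ae_eq_empty.2 (measure_singleton b)
        filter_upwards [MeasureTheory.measure_eq_zero_iff_ae_notMem.1 (measure_singleton b)] with x hx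
        simpa using hx
      filter_upwards [hb] with r hrb hmem
      rw [Set.uIoc_of_le hab] at hmem
      have hrIoo : r ∈ Ioo a b := ⟨hmem.1, lt_of_le_of_ne hmem.2 hrb⟩
      have hGi : G i r = c i := hc i List.mem_cons_self r hrIoo
      have hIH : itInt (l.map G) r B = ∑ k ∈ Finset.range (l.length + 1),
          ((l.take k).map c).prod * (b - r) ^ k / (k.factorial : ℝ)
            * itInt ((l.drop k).map G) b B := by
        apply ih r hrIoo.2.le
        intro i' hi' s hs
        exact hc i' (List.mem_cons_of_mem _ hi') s ⟨lt_trans hrIoo.1 hs.1, hs.2⟩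
      rw [hGi, hIH, Finset.mul_sum]
      congr 1; funext k; ring
    have hsum : (∫ r in a..b, (∑ k ∈ Finset.range (l.length + 1),
            (c i * (((l.take k).map c).prod * itInt ((l.drop k).map G) b B / (k.factorial : ℝ)))
              * (b - r) ^ k))
        = ∑ k ∈ Finset.range (l.length + 1),
            c i * (((l.take k).map c).prod * itInt ((l.drop k).map G) b B / (k.factorial : ℝ))
              * ((b - a) ^ (k + 1) / ((k : ℝ) + 1)) := by
      rw [intervalIntegral.integral_finset_sum]
      · refine Finset.sum_congr rfl fun k _ => ?_
        rw [intervalIntegral.integral_const_mul, integral_pow_sub]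
      · intro k _
        exact (((continuous_const.sub continuous_id).pow k).intervalIntegrable a b).const_mul _
    rw [hsplit, htail, hae, hsum]
    conv_rhs => rw [show (i :: l).length = l.length + 1 from rfl, Finset.sum_range_succ']
    congr 1
    · refine Finset.sum_congr rfl fun k _ => ?_
      simp only [List.take_succ_cons, List.drop_succ_cons, List.map_cons, List.prod_cons]
      have hfac : ((k + 1).factorial : ℝ) = (k.factorial : ℝ) * ((k : ℝ) + 1) := by
        rw [Nat.factorial_succ]; push_cast; ring
      rw [hfac]
      have h1 : (k.factorial : ℝ) ≠ 0 := Nat.cast_ne_zero.2 k.factorial_ne_zero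
      have h2 : ((k : ℝ) + 1) ≠ 0 := by positivity
      field_simp
    · simp

noncomputable def Eseg {ι : Type} (c : ι → ℕ → ℝ) (n : ℕ) : ℕ → List ι → ℝ
  | 0, [] => 1
  | 0, _ :: _ => 0
  | m + 1, l => ∑ k ∈ Finset.range (l.length + 1),
      ((l.take k).map (fun i => c i (n - (m + 1)))).prod * (1 / n : ℝ) ^ k / (k.factorial : ℝ)
        * Eseg c n m (l.drop k)

lemma itInt_eq_Eseg {ι : Type} (G : ι → ℝ → ℝ) (hG : ∀ i, Nice (G i)) (c : ι → ℕ → ℝ)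
    (n : ℕ) (hn : 1 ≤ n)
    (hstep : ∀ i (j : ℕ), j < n → ∀ r ∈ Ioo ((j : ℝ)/n) (((j : ℝ)+1)/n), G i r = c i j) :
    ∀ m, m ≤ n → ∀ l : List ι,
      itInt (l.map G) (((n - m : ℕ) : ℝ)/n) 1 = Eseg c n m l := by
  have hn' : (0 : ℝ) < n := by positivity
  intro m
  induction m with
  | zero =>
    intro _ l
    have h1 : ((n - 0 : ℕ) : ℝ)/n = 1 := by
      rw [Nat.sub_zero]; field_simp
    rw [h1]
    cases l with
    | nil => simp [itInt, Eseg]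
    | cons i l' => simp [itInt, Eseg, intervalIntegral.integral_same]
  | succ m ih =>
    intro hm l
    have hmn : m ≤ n := Nat.le_of_succ_le hm
    set j : ℕ := n - (m + 1) with hj
    have hjn : j < n := by omega
    have hcast : ((n - m : ℕ) : ℝ) = (j : ℝ) + 1 := by
      have h : (n - m : ℕ) = j + 1 := by omega
      rw [h]; push_cast; ring
    have hab : ((j : ℝ))/n ≤ ((n - m : ℕ) : ℝ)/n := by
      rw [hcast]; gcongr; linarith
    have hb1 : ((n - m : ℕ) : ℝ)/n ≤ 1 := by
      rw [div_le_one hn']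
      exact_mod_cast Nat.cast_le.2 (Nat.sub_le n m)
    rw [chenConst G hG (fun i => c i j) (((n - m : ℕ) : ℝ)/n) 1 hb1 l ((j : ℝ)/n) hab ?_]
    · rw [Eseg]
      refine Finset.sum_congr rfl fun k _ => ?_
      rw [ih hmn (l.drop k), ← hj]
      congr 2
      rw [hcast, div_sub_div_same]
      ring_nf
    · intro i _ r hr
      refine hstep i j hjn r ?_
      rwa [hcast] at hr

noncomputable def Dseg {ι : Type} (base : ι → ℕ → ℝ) (n : ℕ) : ℕ → List ι → ℝ
  | 0, [] => 1
  | 0, _ :: _ => 0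
  | m + 1, l => (∑ k ∈ Finset.range (l.length + 1),
      ((l.take k).map (fun i => base i (n - (m + 1)))).prod * (1 / n : ℝ) ^ k / (k.factorial : ℝ)
        * Dseg base n m (l.drop k)) - Dseg base n m l

lemma Eseg_congr {ι : Type} (c c' : ι → ℕ → ℝ) (n : ℕ) :
    ∀ m, (∀ i j, n - m ≤ j → c i j = c' i j) → ∀ l, Eseg c n m l = Eseg c' n m l := by
  intro m
  induction m with
  | zero => intro _ l; cases l <;> rfl
  | succ m ih =>
    intro h l
    rw [Eseg, Eseg]
    refine Finset.sum_congr rfl fun k _ => ?_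
    rw [ih (fun i j hj => h i j (le_trans (Nat.sub_le_sub_left (Nat.le_succ m) n) hj))]
    have heq : (fun i => c i (n - (m + 1))) = fun i => c' i (n - (m + 1)) :=
      funext fun i => h i _ le_rfl
    rw [heq]

/-- the segments `n - m, …, n - 1` -/
def segs (n m : ℕ) : Finset ℕ := (Finset.range n).filter (fun j => n - m ≤ j)

lemma segs_zero (n : ℕ) : segs n 0 = ∅ := by
  ext j
  simp only [segs, Finset.mem_filter, Finset.mem_range, Finset.notMem_empty, iff_false,
    not_and]
  omega

lemma segs_self (n : ℕ) : segs n n = Finset.range n := by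
  ext j
  simp only [segs, Finset.mem_filter, Finset.mem_range]
  omega

lemma segs_card {n m : ℕ} (h : m ≤ n) : (segs n m).card = m := by
  have : segs n m = Finset.Ico (n - m) n := by ext j; simp [segs]; omega
  rw [this, Nat.card_Ico]; omega

lemma segs_succ {n m : ℕ} (h : m + 1 ≤ n) :
    segs n (m + 1) = insert (n - (m + 1)) (segs n m) := by
  ext j; simp [segs, Finset.mem_insert]; omega

lemma not_mem_segs {n m : ℕ} (h : m + 1 ≤ n) : n - (m + 1) ∉ segs n m := by
  simp [segs]; omega

lemma IE {ι : Type} (base : ι → ℕ → ℝ) (n : ℕ) :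
    ∀ m, m ≤ n → ∀ l : List ι,
      ∑ S ∈ (segs n m).powerset,
        (-1 : ℝ) ^ (m - S.card) * Eseg (fun i j => if j ∈ S then base i j else 0) n m l
      = Dseg base n m l := by
  intro m
  induction m with
  | zero =>
    intro _ l
    rw [segs_zero]
    cases l <;> simp [Eseg, Dseg]
  | succ m ih =>
    intro hm l
    have hmn : m ≤ n := Nat.le_of_succ_le hm
    set a : ℕ := n - (m + 1) with ha
    rw [segs_succ hm, Finset.sum_powerset_insert (not_mem_segs hm)]
    have key1 : ∀ S ∈ (segs n m).powerset,
        Eseg (fun i j => if j ∈ S then base i j else 0) n (m + 1) l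
        = Eseg (fun i j => if j ∈ S then base i j else 0) n m l := by
      intro S hS
      have haS : a ∉ S := fun hc =>
        not_mem_segs hm (Finset.mem_powerset.1 hS hc)
      rw [Eseg]
      rw [Finset.sum_eq_single 0]
      · simp
      · intro k hk hk0
        have hk1 : 1 ≤ k := Nat.one_le_iff_ne_zero.2 hk0
        have hkl : k ≤ l.length := by
          have := Finset.mem_range.1 hk; omega
        have hne : (l.take k) ≠ [] := by
          have : (l.take k).length = k := by
            rw [List.length_take]; omega
          intro hc; rw [hc] at this; simp at this; omega
        obtain ⟨i, hi⟩ := List.exists_mem_of_ne_nil _ hne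
        have : ((l.take k).map (fun i => if (n - (m+1)) ∈ S then base i (n - (m+1)) else 0)).prod = 0 := by
          apply List.prod_eq_zero
          refine List.mem_map.2 ⟨i, hi, ?_⟩
          rw [if_neg]; rwa [← ha]
        rw [this]; ring
      · intro h; simp at h
    have hfirst : (∑ S ∈ (segs n m).powerset,
        (-1:ℝ) ^ (m + 1 - S.card) * Eseg (fun i j => if j ∈ S then base i j else 0) n (m+1) l)
        = - Dseg base n m l := by
      rw [← ih hmn l, ← Finset.sum_neg_distrib]
      refine Finset.sum_congr rfl fun S hS => ?_
      rw [key1 S hS]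
      have hcard : S.card ≤ m := by
        have := Finset.card_le_card (Finset.mem_powerset.1 hS)
        rwa [segs_card hmn] at this
      have h1 : m + 1 - S.card = (m - S.card) + 1 := by omega
      rw [h1, pow_succ]
      ring
    have hsecond : (∑ S ∈ (segs n m).powerset,
        (-1:ℝ) ^ (m + 1 - (insert a S).card) *
          Eseg (fun i j => if j ∈ insert a S then base i j else 0) n (m+1) l)
        = ∑ k ∈ Finset.range (l.length + 1),
            ((l.take k).map (fun i => base i (n - (m + 1)))).prod * (1 / n : ℝ) ^ k
              / (k.factorial : ℝ) * Dseg base n m (l.drop k) := by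
      have step : ∀ S ∈ (segs n m).powerset,
          (-1:ℝ) ^ (m + 1 - (insert a S).card) *
            Eseg (fun i j => if j ∈ insert a S then base i j else 0) n (m+1) l
          = ∑ k ∈ Finset.range (l.length + 1),
              ((l.take k).map (fun i => base i (n - (m + 1)))).prod * (1 / n : ℝ) ^ k
                / (k.factorial : ℝ) *
                ((-1:ℝ) ^ (m - S.card) *
                  Eseg (fun i j => if j ∈ S then base i j else 0) n m (l.drop k)) := by
        intro S hS
        have haS : a ∉ S := fun hc => not_mem_segs hm (Finset.mem_powerset.1 hS hc)
        have hcardS : S.card ≤ m := by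
          have := Finset.card_le_card (Finset.mem_powerset.1 hS)
          rwa [segs_card hmn] at this
        have hcard : (insert a S).card = S.card + 1 := Finset.card_insert_of_notMem haS
        have hexp : m + 1 - (insert a S).card = m - S.card := by rw [hcard]; omega
        rw [hexp, Eseg, Finset.mul_sum]
        refine Finset.sum_congr rfl fun k _ => ?_
        have hhead : (fun i => if (n - (m+1)) ∈ insert a S then base i (n - (m+1)) else 0)
            = fun i => base i (n - (m+1)) := by
          funext i
          rw [if_pos]
          rw [← ha]
          exact Finset.mem_insert_self a S
        have hinner : Eseg (fun i j => if j ∈ insert a S then base i j else 0) n m (l.drop k)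
            = Eseg (fun i j => if j ∈ S then base i j else 0) n m (l.drop k) := by
          apply Eseg_congr
          intro i j hj
          have hja : j ≠ a := by rw [ha]; omega
          simp [Finset.mem_insert, hja]
        rw [hhead, hinner]
        ring
      rw [Finset.sum_congr rfl step, Finset.sum_comm]
      refine Finset.sum_congr rfl fun k _ => ?_
      rw [← Finset.mul_sum, ih hmn (l.drop k)]
    rw [hfirst, hsecond, Dseg]
    ring

def matchProd {ι : Type} (base : ι → ℕ → ℝ) : ℕ → List ι → ℝ
  | _, [] => 1
  | j, i :: l => base i j * matchProd base (j + 1) l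

lemma Dseg_eval {ι : Type} (base : ι → ℕ → ℝ) (n : ℕ) :
    ∀ m, m ≤ n → ∀ l : List ι,
      (l.length < m → Dseg base n m l = 0) ∧
      (l.length = m → Dseg base n m l = (1 / n : ℝ) ^ m * matchProd base (n - m) l) := by
  intro m
  induction m with
  | zero =>
    intro _ l
    refine ⟨fun h => absurd h (by omega), fun h => ?_⟩
    rw [List.length_eq_zero_iff.1 h]
    simp [Dseg, matchProd]
  | succ m ih =>
    intro hm l
    have hmn : m ≤ n := Nat.le_of_succ_le hm
    constructor
    · intro hlen
      rw [Dseg]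
      have hzero : ∀ k ∈ Finset.range (l.length + 1), k ≠ 0 →
          ((l.take k).map (fun i => base i (n - (m + 1)))).prod * (1 / n : ℝ) ^ k
            / (k.factorial : ℝ) * Dseg base n m (l.drop k) = 0 := by
        intro k hk hk0
        have hkr := Finset.mem_range.1 hk
        have : (l.drop k).length < m := by
          rw [List.length_drop]; omega
        rw [(ih hmn (l.drop k)).1 this]; ring
      rw [Finset.sum_eq_single 0 hzero (fun h => absurd (Finset.mem_range.2 (by omega)) h),
        List.take_zero, List.drop_zero]
      simp only [List.map_nil, List.prod_nil, pow_zero, Nat.factorial_zero, Nat.cast_one]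
      ring
    · intro hlen
      rw [Dseg]
      cases l with
      | nil => simp at hlen
      | cons i l' =>
        have hl' : l'.length = m := by simpa using hlen
        have hsub : ({0, 1} : Finset ℕ) ⊆ Finset.range ((i :: l').length + 1) := by
          intro x hx
          simp only [Finset.mem_insert, Finset.mem_singleton] at hx
          rcases hx with rfl | rfl <;> simp [List.length_cons]
        have hzero : ∀ k ∈ Finset.range ((i :: l').length + 1), k ∉ ({0, 1} : Finset ℕ) →
            (((i :: l').take k).map (fun i => base i (n - (m + 1)))).prod * (1 / n : ℝ) ^ k
              / (k.factorial : ℝ) * Dseg base n m ((i :: l').drop k) = 0 := by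
          intro k hk hk01
          have hkr := Finset.mem_range.1 hk
          have hk2 : 2 ≤ k := by
            simp only [Finset.mem_insert, Finset.mem_singleton] at hk01
            omega
          have : ((i :: l').drop k).length < m := by
            rw [List.length_drop]; simp only [List.length_cons] at hkr ⊢; omega
          rw [(ih hmn _).1 this]; ring
        rw [← Finset.sum_subset hsub (fun x hx hx01 => hzero x hx hx01)]
        rw [show ({0, 1} : Finset ℕ) = insert 0 {1} from rfl,
          Finset.sum_insert (by simp), Finset.sum_singleton]
        simp only [List.take_zero, List.drop_zero, List.map_nil, List.prod_nil, pow_zero,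
          Nat.factorial_zero, Nat.cast_one, List.take_succ_cons, List.take_zero,
          List.drop_succ_cons, List.map_cons, List.prod_cons, Nat.factorial_one,
          pow_one]
        rw [(ih hmn l').2 hl']
        have harith : n - m = (n - (m + 1)) + 1 := by omega
        rw [matchProd, ← harith]
        ring

lemma matchProd_ofFn {ι : Type} [DecidableEq ι] (U : ℕ → ι) :
    ∀ (p : ℕ) (v : Fin p → ι) (j₀ : ℕ),
      matchProd (fun i j => if i = U j then (1:ℝ) else 0) j₀ (List.ofFn v)
        = if (∀ k : Fin p, v k = U (j₀ + k)) then 1 else 0 := by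
  intro p
  induction p with
  | zero => intro v j₀; simp [matchProd]
  | succ p ih =>
    intro v j₀
    rw [List.ofFn_succ, matchProd, ih (fun k => v k.succ) (j₀ + 1)]
    have harith : ∀ k : Fin p, j₀ + 1 + (k : ℕ) = j₀ + (k.succ : ℕ) := by
      intro k; simp [Fin.val_succ]; omega
    have hcond : (∀ k : Fin (p+1), v k = U (j₀ + k)) ↔
        (v 0 = U (j₀ + (0 : Fin (p+1)))) ∧ ∀ k : Fin p, v k.succ = U (j₀ + 1 + k) := by
      rw [Fin.forall_fin_succ]
      constructor
      · rintro ⟨h0, hs⟩; exact ⟨h0, fun k => by rw [harith k]; exact hs k⟩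
      · rintro ⟨h0, hs⟩; exact ⟨h0, fun k => by rw [← harith k]; exact hs k⟩
    by_cases h0 : v 0 = U (j₀ + (0 : Fin (p+1)))
    · by_cases hrest : ∀ k : Fin p, v k.succ = U (j₀ + 1 + k)
      · rw [if_pos (hcond.2 ⟨h0, hrest⟩), if_pos hrest, if_pos]
        · ring
        · simpa using h0
      · rw [if_neg (fun hc => hrest (hcond.1 hc).2), if_neg hrest]; ring
    · rw [if_neg (fun hc => h0 (hcond.1 hc).1), if_neg (by simpa using h0)]; ring

/-! ## The piecewise linear path -/

noncomputable def clamp (n j : ℕ) (s : ℝ) : ℝ := max 0 (min (s - (j:ℝ)/n) (1/n))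

noncomputable def pathX (n : ℕ) (c : Fin 2 → ℕ → ℝ) (a : Fin 2) (s : ℝ) : ℝ :=
  ∑ j ∈ Finset.range n, c a j * clamp n j s

variable {n : ℕ}

lemma clamp_eq_full (hn : 1 ≤ n) {j : ℕ} {x : ℝ} (h : ((j:ℝ)+1)/n ≤ x) :
    clamp n j x = 1/n := by
  have hn' : (0:ℝ) < n := by positivity
  have hsplit : ((j:ℝ)+1)/n = (j:ℝ)/n + 1/n := by ring
  have h1 : (1:ℝ)/n ≤ x - (j:ℝ)/n := by rw [hsplit] at h; linarith
  rw [clamp, min_eq_right h1, max_eq_right (by positivity)]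

lemma clamp_eq_zero (hn : 1 ≤ n) {j : ℕ} {x : ℝ} (h : x ≤ (j:ℝ)/n) :
    clamp n j x = 0 := by
  have h1 : x - (j:ℝ)/n ≤ 0 := by linarith
  have hn' : (0:ℝ) < n := by positivity
  rw [clamp, max_eq_left]
  exact le_trans (min_le_left _ _) h1

lemma clamp_eq_mid (hn : 1 ≤ n) {j : ℕ} {x : ℝ} (h1 : (j:ℝ)/n ≤ x) (h2 : x ≤ ((j:ℝ)+1)/n) :
    clamp n j x = x - (j:ℝ)/n := by
  have hn' : (0:ℝ) < n := by positivity
  have hsplit : ((j:ℝ)+1)/n = (j:ℝ)/n + 1/n := by ring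
  have ha : x - (j:ℝ)/n ≤ 1/n := by rw [hsplit] at h2; linarith
  rw [clamp, min_eq_left ha, max_eq_right (by linarith)]

lemma pathX_affine (hn : 1 ≤ n) (c : Fin 2 → ℕ → ℝ) {j : ℕ} (hj : j < n)
    {s : ℝ} (hs : s ∈ Icc ((j:ℝ)/n) (((j:ℝ)+1)/n)) (a : Fin 2) :
    pathX n c a s = pathX n c a ((j:ℝ)/n) + (s - (j:ℝ)/n) * c a j := by
  have hn' : (0:ℝ) < n := by positivity
  have key : (∑ j' ∈ Finset.range n, c a j' * clamp n j' s)
      - (∑ j' ∈ Finset.range n, c a j' * clamp n j' ((j:ℝ)/n)) = (s - (j:ℝ)/n) * c a j := by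
    rw [← Finset.sum_sub_distrib, Finset.sum_eq_single j]
    · rw [clamp_eq_mid hn hs.1 hs.2, clamp_eq_zero hn (le_refl _)]
      ring
    · intro j' _ hne
      rcases lt_or_gt_of_ne hne with hlt | hgt
      · have hb : ((j':ℝ)+1)/n ≤ (j:ℝ)/n := by
          gcongr
          exact_mod_cast hlt
        rw [clamp_eq_full hn (le_trans hb hs.1), clamp_eq_full hn hb]
        ring
      · have hb : ((j:ℝ)+1)/n ≤ (j':ℝ)/n := by
          gcongr
          exact_mod_cast hgt
        have hb2 : (j:ℝ)/n ≤ (j':ℝ)/n := by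
          have h1n : (0:ℝ) < 1/n := by positivity
          have hx : ((j:ℝ)+1)/n = (j:ℝ)/n + 1/n := by ring
          linarith
        rw [clamp_eq_zero hn (le_trans hs.2 hb), clamp_eq_zero hn hb2]
        ring
    · intro h; exact absurd (Finset.mem_range.2 hj) h
  rw [pathX, pathX]
  linarith [key]


lemma pathX_isPWLinear (hn : 1 ≤ n) (c : Fin 2 → ℕ → ℝ) : IsPWLinear (pathX n c) 1 := by
  have hn' : (0:ℝ) < n := by positivity
  refine ⟨n, fun j => ((j : ℕ) : ℝ)/n, ?_, ?_, ?_, ?_⟩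
  · intro j j' hjj'
    exact (div_le_div_iff_of_pos_right hn').2 (by exact_mod_cast hjj')
  · simp
  · simp only [Fin.val_last]
    field_simp
  · intro j
    refine ⟨fun a => c a (j : ℕ), fun s hs a => ?_⟩
    have h1 : ((j.castSucc : Fin (n+1)) : ℕ) = (j : ℕ) := Fin.coe_castSucc j
    have h2 : (((j.succ : Fin (n+1)) : ℕ) : ℝ) = ((j:ℕ):ℝ) + 1 := by
      rw [Fin.val_succ]; push_cast; ring
    simp only [Fin.coe_castSucc, Fin.val_succ] at hs ⊢
    have hs' : s ∈ Icc (((j:ℕ):ℝ)/n) ((((j:ℕ):ℝ)+1)/n) := by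
      convert hs using 3
      push_cast
      ring
    exact pathX_affine hn c j.isLt hs' a

lemma clamp_lipschitz (n j : ℕ) (s t : ℝ) : |clamp n j s - clamp n j t| ≤ |s - t| := by
  rw [clamp, clamp, max_comm (0:ℝ) _, max_comm (0:ℝ) _]
  refine le_trans (abs_max_sub_max_le_abs _ _ _) ?_
  refine le_trans (abs_min_sub_min_le_max _ _ _ _) ?_
  simp only [sub_self, abs_zero, sub_sub_sub_cancel_right]
  exact max_le le_rfl (abs_nonneg _)

lemma pathX_lipschitz (c : Fin 2 → ℕ → ℝ) (hc : ∀ a j, |c a j| ≤ 1) (a : Fin 2) :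
    LipschitzWith (n : ℝ≥0) (pathX n c a) := by
  apply LipschitzWith.of_dist_le_mul
  intro x y
  rw [Real.dist_eq, Real.dist_eq, pathX, pathX, ← Finset.sum_sub_distrib]
  refine le_trans (Finset.abs_sum_le_sum_abs _ _) ?_
  have hbound : ∀ j ∈ Finset.range n,
      |c a j * clamp n j x - c a j * clamp n j y| ≤ |x - y| := by
    intro j _
    rw [← mul_sub, abs_mul]
    calc |c a j| * |clamp n j x - clamp n j y| ≤ 1 * |x - y| :=
          mul_le_mul (hc a j) (clamp_lipschitz n j x y) (abs_nonneg _) zero_le_one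
      _ = |x - y| := one_mul _
  refine le_trans (Finset.sum_le_sum hbound) ?_
  rw [Finset.sum_const, Finset.card_range, nsmul_eq_mul]
  exact le_of_eq (by push_cast; ring)

lemma pathX_nice (c : Fin 2 → ℕ → ℝ) (hc : ∀ a j, |c a j| ≤ 1) (a : Fin 2) :
    Nice (deriv (pathX n c a)) := by
  refine ⟨measurable_deriv _, (n : ℝ), fun x => ?_⟩
  have := norm_deriv_le_of_lipschitz (𝕜 := ℝ) (pathX_lipschitz (n := n) c hc a) (x₀ := x)
  simpa [Real.norm_eq_abs] using this

lemma pathX_deriv_step (hn : 1 ≤ n) (c : Fin 2 → ℕ → ℝ) {j : ℕ} (hj : j < n)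
    {r : ℝ} (hr : r ∈ Ioo ((j:ℝ)/n) (((j:ℝ)+1)/n)) (a : Fin 2) :
    deriv (pathX n c a) r = c a j := by
  have hmem : Ioo ((j:ℝ)/n) (((j:ℝ)+1)/n) ∈ nhds r := Ioo_mem_nhds hr.1 hr.2
  have hev : pathX n c a =ᶠ[nhds r]
      (fun s => pathX n c a ((j:ℝ)/n) + (s - (j:ℝ)/n) * c a j) :=
    Filter.eventually_of_mem hmem
      (fun s hs => pathX_affine hn c hj (Ioo_subset_Icc_self hs) a)
  rw [hev.deriv_eq]
  have hd : HasDerivAt (fun s : ℝ => pathX n c a ((j:ℝ)/n) + (s - (j:ℝ)/n) * c a j)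
      (1 * c a j) r := (((hasDerivAt_id r).sub_const _).mul_const _).const_add _
  simpa using hd.deriv


end Stmt13

open Stmt13 in
/-- for every n ≥ 1, the degree-n components of signatures of piecewise
linear paths on [0,1] span the full degree-n homogeneous component πₙ T((ℂ²)),
represented as the coefficient functions on words of length n. -/
theorem stmt13 (n : ℕ) (hn : 1 ≤ n) :
    Submodule.span ℂ
      {v : (Fin n → Fin 2) → ℂ | ∃ X : Fin 2 → ℝ → ℝ, IsPWLinear X 1 ∧
        v = fun w => ((itInt ((List.ofFn w).map fun i => deriv (X i)) 0 1 : ℝ) : ℂ)} = ⊤ := by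
  classical
  rw [eq_top_iff]
  intro v _
  rw [pi_eq_sum_univ v]
  refine Submodule.sum_mem _ fun u _ => Submodule.smul_mem _ _ ?_
  set U : ℕ → Fin 2 := fun j => if h : j < n then u ⟨j, h⟩ else 0 with hU
  set base : Fin 2 → ℕ → ℝ := fun i j => if i = U j then 1 else 0 with hbase
  set M := Submodule.span ℂ
      {v : (Fin n → Fin 2) → ℂ | ∃ X : Fin 2 → ℝ → ℝ, IsPWLinear X 1 ∧
        v = fun w => ((itInt ((List.ofFn w).map fun i => deriv (X i)) 0 1 : ℝ) : ℂ)} with hM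
  have hUu : ∀ k : Fin n, U (k : ℕ) = u k := by
    intro k
    rw [hU]
    simp only [Fin.is_lt, dif_pos, Fin.eta]
  have hmem : ∀ S : Finset ℕ,
      (fun w : Fin n → Fin 2 =>
        ((Eseg (fun i j => if j ∈ S then base i j else 0) n n (List.ofFn w) : ℝ) : ℂ)) ∈ M := by
    intro S
    have hc : ∀ (a : Fin 2) (j : ℕ), |(if j ∈ S then base a j else 0 : ℝ)| ≤ 1 := by
      intro a j
      rw [hbase]
      dsimp only
      split_ifs <;> norm_num
    apply Submodule.subset_span
    refine ⟨pathX n (fun i j => if j ∈ S then base i j else 0), pathX_isPWLinear hn _, ?_⟩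
    funext w
    have h0 : ((n - n : ℕ) : ℝ)/n = 0 := by simp
    have hit := itInt_eq_Eseg (fun i => deriv (pathX n (fun i j => if j ∈ S then base i j else 0) i))
      (fun i => pathX_nice (n := n) _ hc i)
      (fun i j => if j ∈ S then base i j else 0) n hn
      (fun i j hj r hr => pathX_deriv_step hn _ hj hr i) n le_rfl (List.ofFn w)
    rw [h0] at hit
    rw [← hit]
  have hsum : (∑ S ∈ (segs n n).powerset, ((-1:ℂ) ^ (n - S.card)) •
      (fun w : Fin n → Fin 2 =>
        ((Eseg (fun i j => if j ∈ S then base i j else 0) n n (List.ofFn w) : ℝ) : ℂ))) ∈ M :=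
    Submodule.sum_mem M fun S _ => Submodule.smul_mem M _ (hmem S)
  have heval : (∑ S ∈ (segs n n).powerset, ((-1:ℂ) ^ (n - S.card)) •
      (fun w : Fin n → Fin 2 =>
        ((Eseg (fun i j => if j ∈ S then base i j else 0) n n (List.ofFn w) : ℝ) : ℂ)))
      = fun w : Fin n → Fin 2 =>
          (((((1:ℝ)/n) ^ n * (if u = w then 1 else 0) : ℝ)) : ℂ) := by
    funext w
    have hR : ∑ S ∈ (segs n n).powerset,
        (-1:ℝ) ^ (n - S.card) * Eseg (fun i j => if j ∈ S then base i j else 0) n n (List.ofFn w)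
        = ((1:ℝ)/n) ^ n * (if u = w then 1 else 0) := by
      rw [IE base n n le_rfl (List.ofFn w),
        (Dseg_eval base n n le_rfl (List.ofFn w)).2 (by simp), Nat.sub_self]
      have hmp : matchProd base 0 (List.ofFn w) = if u = w then 1 else 0 := by
        rw [hbase, matchProd_ofFn U n w 0]
        have hcond : (∀ k : Fin n, w k = U (0 + (k : ℕ))) ↔ u = w := by
          constructor
          · intro h
            funext k
            rw [← hUu k, ← zero_add (k : ℕ)]
            exact (h k).symm
          · intro h k
            rw [zero_add, hUu k, h]
        rw [if_congr hcond rfl rfl]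
      rw [hmp]
    rw [Finset.sum_apply]
    have : ∀ S ∈ (segs n n).powerset,
        (((-1:ℂ) ^ (n - S.card)) • (fun w : Fin n → Fin 2 =>
          ((Eseg (fun i j => if j ∈ S then base i j else 0) n n (List.ofFn w) : ℝ) : ℂ))) w
        = (((-1:ℝ) ^ (n - S.card) *
            Eseg (fun i j => if j ∈ S then base i j else 0) n n (List.ofFn w) : ℝ) : ℂ) := by
      intro S _
      simp only [Pi.smul_apply, smul_eq_mul]
      push_cast
      ring
    rw [Finset.sum_congr rfl this, ← Complex.ofReal_sum, hR]
  rw [heval] at hsum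
  have hvec : (fun j : Fin n → Fin 2 => if u = j then (1:ℂ) else 0)
      = ((n:ℂ) ^ n) • (fun w : Fin n → Fin 2 =>
          (((((1:ℝ)/n) ^ n * (if u = w then 1 else 0) : ℝ)) : ℂ)) := by
    funext w
    have hn0 : ((n:ℂ)) ≠ 0 := by
      exact_mod_cast Nat.cast_ne_zero.2 (by omega)
    simp only [Pi.smul_apply, smul_eq_mul]
    push_cast
    by_cases h : u = w
    · rw [if_pos h, if_pos h]
      field_simp
      simp
    · rw [if_neg h, if_neg h]
      simp
  rw [hvec]
  exact Submodule.smul_mem M _ hsum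
end
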